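/- Let F be a field, p a monic irreducible polynomial of degree s over F, and let G_1 ∈ M_{sa}(F) and G_2 ∈ M_{sb}(F) be the generalized Jordan blocks of sizes a and b associated with p, with a ≥ b. If T is an sa × sb matrix over F satisfying G_1 T = T G_2, then the first s(a-b) rows of T are zero and the bottom sb × sb submatrix T_1 of T (formed by the last sb rows) commutes with G_2, i.e. T = [0; T_1] with T_1 ∈ Z(G_2). -/

import Mathlib

open Matrix Polynomial

/-- The companion matrix of a monic polynomial `p` of degree `s`:
ones on the first subdiagonal, `-(coefficients of p)` in the last column. -/
def companionMat (F : Type*) [Field F] (s : ℕ) (p : Polynomial F) :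
    Matrix (Fin s) (Fin s) F :=
  Matrix.of fun i j =>
    if (j : ℕ) = s - 1 then -p.coeff (i : ℕ)
    else if (i : ℕ) = (j : ℕ) + 1 then 1 else 0

/-- The matrix `E` whose `(1,s)` entry is `1` and all other entries are `0`. -/
def Emat (F : Type*) [Field F] (s : ℕ) : Matrix (Fin s) (Fin s) F :=
  Matrix.of fun i j => if (i : ℕ) = 0 ∧ (j : ℕ) = s - 1 then 1 else 0

/-- The generalized Jordan block of size `ℓ` associated with `p` (degree `s`):
the `sℓ × sℓ` block matrix with `ℓ` diagonal `s×s` blocks equal to the companion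
matrix `C` of `p`, blocks `E` directly below the diagonal, zeros elsewhere.
Rows/columns are indexed by `Fin ℓ × Fin s` (block index, index within block). -/
def genJordanBlock (F : Type*) [Field F] (s ℓ : ℕ) (p : Polynomial F) :
    Matrix (Fin ℓ × Fin s) (Fin ℓ × Fin s) F :=
  Matrix.of fun x y =>
    if x.1 = y.1 then companionMat F s p x.2 y.2
    else if (x.1 : ℕ) = (y.1 : ℕ) + 1 then Emat F s x.2 y.2 else 0

/-!
Within block `k`, the basis vectors satisfy `e_(k,j) = G ^ j e_(k,0)`, and because `p` is monic of
degree `s`, `p(G) e_(k,0) = e_(k+1,0)`. Hence `p(G_ℓ)` is the shift `N_ℓ` by one block, and an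
intertwiner satisfies `N_a ^ b T = T N_b ^ b = 0`. Row `(k + b, i)` of `N_a ^ b T` is row `(k, i)`
of `T`, so the first `a - b` block rows of `T` vanish. The last `b` blocks of `G_a` form a copy of
`G_b`, so restricting `G_a T = T G_b` to the last `b` block rows gives `T₁ G_b = G_b T₁`.
-/

theorem Matrix.aeval_mul_eq_mul_aeval {R m n : Type*} [CommRing R] [Fintype m] [Fintype n]
    [DecidableEq m] [DecidableEq n] {A : Matrix m m R} {B : Matrix n n R} {T : Matrix m n R}
    (h : A * T = T * B) (q : R[X]) : aeval A q * T = T * aeval B q := by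
  have hpow (k : ℕ) : A ^ k * T = T * B ^ k := by
    induction k with
    | zero => simp
    | succ k ih => rw [pow_succ, pow_succ, Matrix.mul_assoc, h, ← Matrix.mul_assoc, ih,
        Matrix.mul_assoc]
  induction q using Polynomial.induction_on' with
  | add f g hf hg => rw [map_add, map_add, Matrix.add_mul, Matrix.mul_add, hf, hg]
  | monomial k c => rw [aeval_monomial, aeval_monomial, ← Algebra.smul_def, ← Algebra.smul_def,
      Matrix.smul_mul, Matrix.mul_smul, hpow]

def blockShift (R : Type*) [Zero R] [One R] (ℓ s m : ℕ) :
    Matrix (Fin ℓ × Fin s) (Fin ℓ × Fin s) R :=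
  of fun x y => if (x.1 : ℕ) = y.1 + m ∧ x.2 = y.2 then 1 else 0

section blockShift

variable {R : Type*} [Semiring R] {ℓ s : ℕ}

theorem blockShift_mulVec_single (m : ℕ) (k : Fin ℓ) (j : Fin s) :
    blockShift R ℓ s m *ᵥ Pi.single (k, j) 1 =
      if h : (k : ℕ) + m < ℓ then Pi.single (⟨k + m, h⟩, j) 1 else 0 := by
  ext x
  rw [mulVec_single_one]
  split_ifs with h
  · simp only [col_apply, blockShift, of_apply, Pi.single_apply, Prod.ext_iff, Fin.ext_iff]
  · simp only [col_apply, blockShift, of_apply, Pi.zero_apply]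
    exact if_neg fun hx => h (by have := x.1.isLt; omega)

theorem blockShift_mul (m m' : ℕ) :
    blockShift R ℓ s m * blockShift R ℓ s m' = blockShift R ℓ s (m + m') := by
  refine ext_of_mulVec_single fun ⟨k, j⟩ => ?_
  rw [← mulVec_mulVec, blockShift_mulVec_single, blockShift_mulVec_single]
  split_ifs with h h' h'
  · rw [blockShift_mulVec_single, dif_pos (by simp only; omega)]
    congr 3
    simp only
    omega
  · rw [blockShift_mulVec_single, dif_neg (by simp only; omega)]
  · omega
  · rw [mulVec_zero]

theorem blockShift_one_pow (m : ℕ) : blockShift R ℓ s 1 ^ m = blockShift R ℓ s m := by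
  induction m with
  | zero => ext x y; simp [blockShift, one_apply, Prod.ext_iff, Fin.ext_iff]
  | succ m ih => rw [pow_succ, ih, blockShift_mul]

theorem blockShift_of_le {m : ℕ} (h : ℓ ≤ m) : blockShift R ℓ s m = 0 := by
  ext x y
  exact if_neg fun hx => by have := x.1.isLt; omega

theorem blockShift_mul_apply {n : Type*} (m : ℕ) (M : Matrix (Fin ℓ × Fin s) n R)
    (x : Fin ℓ × Fin s) (h : (x.1 : ℕ) + m < ℓ) (y : n) :
    (blockShift R ℓ s m * M) (⟨x.1 + m, h⟩, x.2) y = M x y := by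
  rw [mul_apply, Finset.sum_eq_single x]
  · simp [blockShift]
  · intro z _ hz
    rw [blockShift, of_apply, if_neg, zero_mul]
    exact fun hxz => hz (Prod.ext (Fin.ext (by simp at hxz; omega)) hxz.2.symm)
  · simp

end blockShift

section genJordanBlock

variable {F : Type*} [Field F] {s ℓ : ℕ} (p : F[X])

theorem genJordanBlock_mulVec_single_of_succ_lt (k : Fin ℓ) (j : Fin s) (h : (j : ℕ) + 1 < s) :
    genJordanBlock F s ℓ p *ᵥ Pi.single (k, j) 1 = Pi.single (k, ⟨j + 1, h⟩) 1 := by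
  ext ⟨xk, xi⟩
  simp only [mulVec_single_one, col_apply, genJordanBlock, companionMat, Emat, of_apply,
    Pi.single_apply, Prod.ext_iff, Fin.ext_iff]
  split_ifs <;> first | rfl | omega

theorem genJordanBlock_mulVec_single_last (hs : 0 < s) (k : Fin ℓ) :
    genJordanBlock F s ℓ p *ᵥ Pi.single (k, ⟨s - 1, by omega⟩) 1 =
      (if h : (k : ℕ) + 1 < ℓ then Pi.single (⟨k + 1, h⟩, ⟨0, hs⟩) 1 else 0) -
        ∑ i : Fin s, p.coeff i • Pi.single (k, i) 1 := by
  ext ⟨xk, xi⟩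
  have hsum : (∑ i : Fin s, p.coeff i • Pi.single (k, i) (1 : F)) (xk, xi) =
      if xk = k then p.coeff xi else 0 := by
    simp [Finset.sum_apply, Pi.single_apply, Prod.ext_iff, ite_and]
  rw [Pi.sub_apply, hsum, mulVec_single_one, col_apply]
  split_ifs
  all_goals simp_all [genJordanBlock, companionMat, Emat, Fin.ext_iff, Pi.single_apply, ite_and]
  omega

theorem genJordanBlock_pow_mulVec_single_zero (k : Fin ℓ) (j : Fin s) :
    genJordanBlock F s ℓ p ^ (j : ℕ) *ᵥ Pi.single (k, ⟨0, j.pos⟩) 1 = Pi.single (k, j) 1 := by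
  obtain ⟨j, hj⟩ := j
  induction j with
  | zero => rw [pow_zero, one_mulVec]
  | succ j ih => rw [pow_succ', ← mulVec_mulVec, ih (by omega),
      genJordanBlock_mulVec_single_of_succ_lt]

variable {p} (hmonic : p.Monic) (hdeg : p.natDegree = s)
include hmonic hdeg

/-- In `p(G) e_(k,0) = ∑ i ≤ s, p_i G ^ i e_(k,0)`, the terms with `i < s` cancel against the
`-∑ i < s, p_i e_(k,i)` part of `G ^ s e_(k,0) = G e_(k,s-1)`. -/
theorem aeval_genJordanBlock_mulVec_single_zero (hs : 0 < s) (k : Fin ℓ) :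
    aeval (genJordanBlock F s ℓ p) p *ᵥ Pi.single (k, ⟨0, hs⟩) 1 =
      if h : (k : ℕ) + 1 < ℓ then Pi.single (⟨k + 1, h⟩, ⟨0, hs⟩) 1 else 0 := by
  set G := genJordanBlock F s ℓ p
  have htopCoeff : p.coeff s = 1 := hdeg ▸ hmonic.coeff_natDegree
  have hpow (i : Fin s) : G ^ (i : ℕ) *ᵥ Pi.single (k, ⟨0, hs⟩) 1 = Pi.single (k, i) 1 :=
    genJordanBlock_pow_mulVec_single_zero p k i
  have htop : G ^ s *ᵥ Pi.single (k, ⟨0, hs⟩) 1 =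
      (if h : (k : ℕ) + 1 < ℓ then Pi.single (⟨k + 1, h⟩, ⟨0, hs⟩) 1 else 0) -
        ∑ i : Fin s, p.coeff i • Pi.single (k, i) 1 := by
    have hsplit : G ^ s = G * G ^ (s - 1) := by rw [← pow_succ', Nat.sub_add_cancel hs]
    rw [hsplit, ← mulVec_mulVec, hpow ⟨s - 1, by omega⟩, genJordanBlock_mulVec_single_last]
  have hlow : ∑ i ∈ Finset.range s, (p.coeff i • G ^ i) *ᵥ Pi.single (k, ⟨0, hs⟩) 1 =
      ∑ i : Fin s, p.coeff i • Pi.single (k, i) 1 := by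
    rw [← Fin.sum_univ_eq_sum_range (fun i => (p.coeff i • G ^ i) *ᵥ _)]
    simp only [smul_mulVec, hpow]
  rw [aeval_eq_sum_range, hdeg, sum_mulVec, Finset.sum_range_succ, hlow, smul_mulVec,
    htop, htopCoeff, one_smul, add_sub_cancel]

theorem aeval_genJordanBlock : aeval (genJordanBlock F s ℓ p) p = blockShift F ℓ s 1 := by
  set G := genJordanBlock F s ℓ p
  refine ext_of_mulVec_single fun ⟨k, j⟩ => ?_
  have hcomm : aeval G p * G ^ (j : ℕ) = G ^ (j : ℕ) * aeval G p :=
    aeval_mul_eq_mul_aeval (pow_mul_comm' G (j : ℕ)).symm p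
  rw [blockShift_mulVec_single, ← genJordanBlock_pow_mulVec_single_zero p k j, mulVec_mulVec,
    hcomm, ← mulVec_mulVec, aeval_genJordanBlock_mulVec_single_zero hmonic hdeg]
  split_ifs
  · exact genJordanBlock_pow_mulVec_single_zero p _ j
  · exact mulVec_zero _

end genJordanBlock

def offsetBlocks {s ℓ' ℓ : ℕ} (c : ℕ) (h : c + ℓ' ≤ ℓ) (x : Fin ℓ' × Fin s) : Fin ℓ × Fin s :=
  (⟨c + x.1, by omega⟩, x.2)

section offsetBlocks

variable {s ℓ' ℓ : ℕ} {c : ℕ} (h : c + ℓ' ≤ ℓ)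

theorem offsetBlocks_injective : Function.Injective (offsetBlocks (s := s) c h) := by
  intro x y hxy
  simp only [offsetBlocks, Prod.ext_iff, Fin.ext_iff, Nat.add_left_cancel_iff] at hxy
  exact Prod.ext (Fin.ext hxy.1) (Fin.ext hxy.2)

theorem mem_range_offsetBlocks {z : Fin ℓ × Fin s} (hc : c ≤ z.1) (hz : (z.1 : ℕ) < c + ℓ') :
    z ∈ Set.range (offsetBlocks c h) :=
  ⟨(⟨z.1 - c, by omega⟩, z.2), Prod.ext (Fin.ext (by simp [offsetBlocks]; omega)) rfl⟩

theorem genJordanBlock_offsetBlocks {F : Type*} [Field F] (p : F[X]) (x y : Fin ℓ' × Fin s) :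
    genJordanBlock F s ℓ p (offsetBlocks c h x) (offsetBlocks c h y) =
      genJordanBlock F s ℓ' p x y := by
  simp only [genJordanBlock, offsetBlocks, of_apply, Fin.ext_iff]
  split_ifs <;> first | rfl | omega

end offsetBlocks

section intertwiner

variable {F : Type*} [Field F] {s a b : ℕ} {p : F[X]}
  {T : Matrix (Fin a × Fin s) (Fin b × Fin s) F}

theorem apply_eq_zero_of_genJordanBlock_mul_eq (hmonic : p.Monic) (hdeg : p.natDegree = s)
    (hT : genJordanBlock F s a p * T = T * genJordanBlock F s b p)
    (x : Fin a × Fin s) (y : Fin b × Fin s) (hx : (x.1 : ℕ) < a - b) : T x y = 0 := by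
  have hshift : blockShift F a s b * T = 0 := by
    rw [← blockShift_one_pow, ← aeval_genJordanBlock hmonic hdeg, ← map_pow,
      aeval_mul_eq_mul_aeval hT, map_pow, aeval_genJordanBlock hmonic hdeg, blockShift_one_pow,
      blockShift_of_le le_rfl, Matrix.mul_zero]
  rw [← blockShift_mul_apply b T x (by omega), hshift, Matrix.zero_apply]

theorem commute_submatrix_offsetBlocks_genJordanBlock (hab : b ≤ a)
    (hT : genJordanBlock F s a p * T = T * genJordanBlock F s b p)
    (hzero : ∀ x y, (x.1 : ℕ) < a - b → T x y = 0) :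
    Commute (T.submatrix (offsetBlocks (a - b) (by omega)) id) (genJordanBlock F s b p) := by
  set e : Fin b × Fin s → Fin a × Fin s := offsetBlocks (a - b) (by omega)
  ext x y
  calc (T.submatrix e id * genJordanBlock F s b p) x y
      = (T * genJordanBlock F s b p) (e x) y := rfl
    _ = ∑ z, genJordanBlock F s a p (e x) z * T z y := by rw [← hT, mul_apply]
    _ = ∑ w, genJordanBlock F s a p (e x) (e w) * T (e w) y := by
      refine (Fintype.sum_of_injective e (offsetBlocks_injective _) _ _ (fun z hz => ?_)
        fun _ => rfl).symm
      have hz : (z.1 : ℕ) < a - b := by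
        by_contra! hge
        exact hz (mem_range_offsetBlocks _ hge (by omega))
      rw [hzero z y hz, mul_zero]
    _ = (genJordanBlock F s b p * T.submatrix e id) x y := by
      simp only [mul_apply, submatrix_apply, id, e, genJordanBlock_offsetBlocks]

end intertwiner

/-- if `G_1, G_2` are generalized Jordan blocks of sizes `a ≥ b`
associated with a monic irreducible `p` of degree `s` and `G_1 T = T G_2`, then
`T = [0; T_1]` with `T_1 ∈ Z(G_2)`: the first `s(a-b)` rows of `T` vanish and the
bottom `sb × sb` submatrix commutes with `G_2`. -/
theorem intertwiner_genJordanBlocks_ge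
    {F : Type*} [Field F] {s a b : ℕ} (hab : b ≤ a)
    (p : Polynomial F) (hmonic : p.Monic)
    (hdeg : p.natDegree = s)
    (T : Matrix (Fin a × Fin s) (Fin b × Fin s) F)
    (hT : genJordanBlock F s a p * T = T * genJordanBlock F s b p) :
    (∀ (x : Fin a × Fin s) (y : Fin b × Fin s), (x.1 : ℕ) < a - b → T x y = 0) ∧
    (Matrix.of fun x y : Fin b × Fin s =>
        T (⟨a - b + (x.1 : ℕ), by have := x.1.isLt; omega⟩, x.2) y) *
        genJordanBlock F s b p =
      genJordanBlock F s b p *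
        (Matrix.of fun x y : Fin b × Fin s =>
          T (⟨a - b + (x.1 : ℕ), by have := x.1.isLt; omega⟩, x.2) y) := by
  have hzero := apply_eq_zero_of_genJordanBlock_mul_eq hmonic hdeg hT
  exact ⟨hzero, (commute_submatrix_offsetBlocks_genJordanBlock hab hT hzero).eq⟩
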